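/- arXiv:2409.10170 — 4 statements merged into one kernel-verified Lean document; each statement's English description precedes it below -/
import Mathlib

section
/- Every minimal model of a CNF formula F is a model of F ∧ Forced(F). That is, the models of F ∧ Forced(F) form an overapproximation of the set of minimal models of F. -/
abbrev Clause (V : Type*) := List (V × Bool)
abbrev CNF (V : Type*) := List (Clause V)

/-- An assignment satisfies a literal `(v, b)` if it assigns value `b` to `v`. -/
def litSat {V : Type*} (τ : V → Bool) (ℓ : V × Bool) : Prop := τ ℓ.1 = ℓ.2

/-- An assignment satisfies a clause if it satisfies some literal of it. -/
def clauseSat {V : Type*} (τ : V → Bool) (C : Clause V) : Prop := ∃ ℓ ∈ C, litSat τ ℓ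

/-- An assignment is a model of a CNF formula if it satisfies every clause. -/
def sat {V : Type*} (τ : V → Bool) (F : CNF V) : Prop := ∀ C ∈ F, clauseSat τ C

/-- Pointwise order on assignments, with `false < true`. -/
def leA {V : Type*} (τ₁ τ₂ : V → Bool) : Prop := ∀ x, τ₁ x ≤ τ₂ x

/-- Strictly smaller assignment. -/
def ltA {V : Type*} (τ₁ τ₂ : V → Bool) : Prop := leA τ₁ τ₂ ∧ τ₁ ≠ τ₂

/-- A minimal model: a model with no strictly smaller model. -/
def MinModel {V : Type*} (F : CNF V) (τ : V → Bool) : Prop :=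
  sat τ F ∧ ∀ τ₂, sat τ₂ F → ¬ ltA τ₂ τ

/-- Clause `C` forces variable `x` under `τ`: `x` occurs positively in `C` and all
other literals of `C` are falsified by `τ`. -/
def forces {V : Type*} (C : Clause V) (x : V) (τ : V → Bool) : Prop :=
  (x, true) ∈ C ∧ ∀ ℓ ∈ C, ℓ ≠ (x, true) → ¬ litSat τ ℓ

/-- `τ` satisfies the forced formula `Forced(F) = ⋀_x (x → ⋁_{C ∈ Forced(F,x)} ¬(C \ {x}))`:
for every variable assigned true there is a clause containing it positively whose
remaining literals are all falsified. -/
def satForced {V : Type*} (F : CNF V) (τ : V → Bool) : Prop :=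
  ∀ x, τ x = true → ∃ C ∈ F, (x, true) ∈ C ∧ ∀ ℓ ∈ C, ℓ ≠ (x, true) → ¬ litSat τ ℓ

-- Setting a true variable `x` to false can only break clauses that `x` forces; a minimal model
-- admits no such smaller model, so every true variable is forced by some clause.

theorem litSat_update_false {V : Type*} [DecidableEq V] {τ : V → Bool} {x : V}
    {ℓ : V × Bool} (hℓ : litSat τ ℓ) (hne : ℓ ≠ (x, true)) :
    litSat (Function.update τ x false) ℓ := by
  obtain ⟨v, b⟩ := ℓ
  by_cases hv : v = x
  · subst hv
    cases b
    · simp [litSat]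
    · exact absurd rfl hne
  · simpa [litSat, Function.update_of_ne hv] using hℓ

theorem clauseSat_update_false_of_not_forces {V : Type*} [DecidableEq V] {τ : V → Bool}
    {x : V} {C : Clause V} (hC : clauseSat τ C) (hx : ¬ forces C x τ) :
    clauseSat (Function.update τ x false) C := by
  have hwit : ∃ ℓ ∈ C, ℓ ≠ (x, true) ∧ litSat τ ℓ := by
    by_cases hxC : (x, true) ∈ C
    · simp only [forces, hxC, true_and, not_forall, not_not] at hx
      obtain ⟨ℓ, hℓC, hne, hℓ⟩ := hx
      exact ⟨ℓ, hℓC, hne, hℓ⟩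
    · obtain ⟨ℓ, hℓC, hℓ⟩ := hC
      exact ⟨ℓ, hℓC, fun h => hxC (h ▸ hℓC), hℓ⟩
  obtain ⟨ℓ, hℓC, hne, hℓ⟩ := hwit
  exact ⟨ℓ, hℓC, litSat_update_false hℓ hne⟩

theorem ltA_update_false {V : Type*} [DecidableEq V] {τ : V → Bool} {x : V}
    (hx : τ x = true) : ltA (Function.update τ x false) τ := by
  refine ⟨fun y => ?_, fun h => by simpa [hx] using congrFun h x⟩
  by_cases hy : y = x
  · simp [hy]
  · simp [Function.update_of_ne hy]

theorem MinModel.satForced {V : Type*} {F : CNF V} {τ : V → Bool} (h : MinModel F τ) :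
    satForced F τ := by
  classical
  intro x hx
  by_contra hno
  have hsat : sat (Function.update τ x false) F := fun C hC =>
    clauseSat_update_false_of_not_forces (h.1 C hC) fun hforces => hno ⟨C, hC, hforces⟩
  exact h.2 _ hsat (ltA_update_false hx)

/-- every minimal model of `F` is a model of `F ∧ Forced(F)`. -/
theorem stmt5 {V : Type*} (F : CNF V) (τ : V → Bool) (h : MinModel F τ) :
    sat τ F ∧ satForced F τ :=
  ⟨h.1, h.satForced⟩
end

section
/- Let F be an acyclic CNF formula and τ a model of F that is not minimal. Then there exists an infinite sequence of distinct variables x₁, x₂, … all assigned true by τ such that each xᵢ is not justified under τ — contradicting the finiteness of var(F). Hence for acyclic F, every model of F satisfying Forced(F) is a minimal model of F. -/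
/-- Arc of the dependency graph: from `a` to `b` when some clause contains `¬a` and `b`. -/
def dep {V : Type*} (F : CNF V) (a b : V) : Prop :=
  ∃ C ∈ F, (a, false) ∈ C ∧ (b, true) ∈ C

/-- A CNF formula is acyclic if its dependency graph has no directed cycle. -/
def Acyclic {V : Type*} (F : CNF V) : Prop :=
  ∀ a, ¬ Relation.TransGen (dep F) a a

/-- `x` is justified under `τ`: flipping `x` from true to false falsifies `F`. -/
def justified {V : Type*} [DecidableEq V] (F : CNF V) (τ : V → Bool) (x : V) : Prop :=
  ¬ sat (Function.update τ x false) F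

section

variable {V : Type*}

theorem dep_mem_vars_left {F : CNF V} {a b : V} (h : dep F a b) :
    a ∈ F.flatten.map Prod.fst := by
  obtain ⟨C, hC, ha, -⟩ := h
  exact List.mem_map.2 ⟨_, List.mem_flatten.2 ⟨C, hC, ha⟩, rfl⟩

theorem dep_mem_vars_right {F : CNF V} {a b : V} (h : dep F a b) :
    b ∈ F.flatten.map Prod.fst := by
  obtain ⟨C, hC, -, hb⟩ := h
  exact List.mem_map.2 ⟨_, List.mem_flatten.2 ⟨C, hC, hb⟩, rfl⟩

theorem Acyclic.wellFounded_dep {F : CNF V} (hA : Acyclic F) : WellFounded (dep F) := by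
  have : IsStrictOrder V (Relation.TransGen (dep F)) :=
    { irrefl := hA, trans := fun _ _ _ => Relation.TransGen.trans }
  have hwf := Set.wellFoundedOn_iff.1
    ((List.finite_toSet (F.flatten.map Prod.fst)).wellFoundedOn (r := Relation.TransGen (dep F)))
  exact Subrelation.wf
    (fun h => ⟨.single h, dep_mem_vars_left h, dep_mem_vars_right h⟩) hwf

theorem exists_true_false_of_ltA {τ₁ τ₂ : V → Bool} (h : ltA τ₁ τ₂) :
    ∃ x, τ₂ x = true ∧ τ₁ x = false := by
  obtain ⟨hle, hne⟩ := h
  by_contra! hcon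
  exact hne <| funext fun x =>
    Bool.eq_iff_iff.2 ⟨Bool.le_iff_imp.1 (hle x), fun h => by simpa using hcon x h⟩

theorem exists_neg_mem_of_forces {C : Clause V} {x : V} {τ τ₂ : V → Bool} (hC : forces C x τ)
    (hle : leA τ₂ τ) (hsat : clauseSat τ₂ C) (hx : τ₂ x = false) :
    ∃ y, (y, false) ∈ C ∧ τ y = true ∧ τ₂ y = false := by
  obtain ⟨⟨y, b⟩, hyC, hy⟩ := hsat
  have hne : (y, b) ≠ (x, true) := by
    rintro ⟨⟩
    simp_all [litSat]
  have hτ := hC.2 _ hyC hne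
  simp only [litSat] at hy hτ
  cases b
  · exact ⟨y, hyC, by simpa using hτ, hy⟩
  · exact absurd (Bool.le_iff_imp.1 (hle y) hy) hτ

theorem minModel_of_satForced {F : CNF V} (hA : Acyclic F) {τ : V → Bool} (hsat : sat τ F)
    (hforced : satForced F τ) : MinModel F τ := by
  refine ⟨hsat, fun τ₂ hsat₂ hlt => ?_⟩
  obtain ⟨x₀, hx₀⟩ := exists_true_false_of_ltA hlt
  obtain ⟨x, ⟨hx, hx₂⟩, hmin⟩ :=
    hA.wellFounded_dep.has_min {x | τ x = true ∧ τ₂ x = false} ⟨x₀, hx₀⟩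
  obtain ⟨C, hCF, hC⟩ := hforced x hx
  obtain ⟨y, hyC, hy⟩ := exists_neg_mem_of_forces hC hlt.1 (hsat₂ C hCF) hx₂
  exact hmin y hy ⟨C, hCF, hyC, hC.1⟩

end

/-- for acyclic `F`, a model of `F ∧ Forced(F)` that is not minimal
yields an infinite sequence of distinct variables assigned true, none of them
justified — contradicting finiteness of the variable set; hence for acyclic `F`
every model of `F` satisfying `Forced(F)` is minimal. -/
theorem stmt7 {V : Type*} [DecidableEq V] (F : CNF V) (hA : Acyclic F) :
    (∀ τ : V → Bool, sat τ F → satForced F τ → ¬ MinModel F τ →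
      ∃ f : ℕ → V, Function.Injective f ∧
        ∀ i, τ (f i) = true ∧ ¬ justified F τ (f i)) ∧
    (Finite V → ∀ τ : V → Bool, sat τ F → satForced F τ → MinModel F τ) :=
  ⟨fun _ hsat hforced hmin => (hmin (minModel_of_satForced hA hsat hforced)).elim,
    fun _ _ hsat hforced => minModel_of_satForced hA hsat hforced⟩
end

section
/- Let F be a Boolean formula and x a variable. If τ is a minimal model of F with τ(x) = false, then the restriction of τ to var(F) \ {x} is a minimal model of the formula F|_{¬x} obtained by conditioning F on x = false; conversely, extending any minimal model of F|_{¬x} by setting x = false yields a minimal model of F, provided x does not appear only positively in any clause forcing it. -/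
/-- `F` conditioned on `x = false`: clauses containing `¬x` are removed (satisfied)
and the literal `x` is deleted from the remaining clauses. -/
def condNeg {V : Type*} [DecidableEq V] (F : CNF V) (x : V) : CNF {y : V // y ≠ x} :=
  (F.filter (fun C => decide ((x, false) ∉ C))).map
    (fun C => C.filterMap
      (fun ℓ => if h : ℓ.1 = x then none else some ((⟨ℓ.1, h⟩ : {y : V // y ≠ x}), ℓ.2)))

section

variable {V : Type*} {x : V}

lemma ltA_iff_ltA_restrict {τ₁ τ₂ : V → Bool} (h : τ₁ x = τ₂ x) :
    ltA τ₁ τ₂ ↔ ltA (Subtype.restrict (· ≠ x) τ₁) (Subtype.restrict (· ≠ x) τ₂) := by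
  have agree : ∀ y, y = x → τ₁ y = τ₂ y := fun y hy => hy ▸ h
  simp only [ltA, leA, Subtype.restrict, ne_eq, funext_iff, Subtype.forall, not_forall]
  constructor
  · rintro ⟨hle, y, hy⟩
    exact ⟨fun y _ => hle y, y, fun hyx => hy (agree y hyx), hy⟩
  · rintro ⟨hle, y, -, hy⟩
    refine ⟨fun y => ?_, y, hy⟩
    by_cases hyx : y = x
    · exact (agree y hyx).le
    · exact hle y hyx

lemma eq_false_of_leA {τ₁ τ₂ : V → Bool} (hle : leA τ₁ τ₂) (hx : τ₂ x = false) :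
    τ₁ x = false :=
  Bool.eq_false_of_le_false (hx ▸ hle x)

variable [DecidableEq V]

def dropVar (x : V) (ℓ : V × Bool) : Option ({y : V // y ≠ x} × Bool) :=
  if h : ℓ.1 = x then none else some (⟨ℓ.1, h⟩, ℓ.2)

def extendFalse (x : V) (σ : {y : V // y ≠ x} → Bool) : V → Bool :=
  fun y => if h : y = x then false else σ ⟨y, h⟩

@[simp]
lemma extendFalse_self (σ : {y : V // y ≠ x} → Bool) : extendFalse x σ x = false := by
  simp [extendFalse]

@[simp]
lemma restrict_extendFalse (σ : {y : V // y ≠ x} → Bool) :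
    Subtype.restrict (· ≠ x) (extendFalse x σ) = σ := by
  funext y
  simp [Subtype.restrict, extendFalse, y.2]

lemma mem_condNeg {F : CNF V} {C' : Clause {y : V // y ≠ x}} :
    C' ∈ condNeg F x ↔ ∃ C ∈ F, (x, false) ∉ C ∧ C.filterMap (dropVar x) = C' := by
  simp only [condNeg, List.mem_map, List.mem_filter, decide_eq_true_eq, and_assoc]
  rfl

lemma clauseSat_filterMap_dropVar_iff {τ : V → Bool} {C : Clause V} (hx : τ x = false)
    (hC : (x, false) ∉ C) :
    clauseSat (Subtype.restrict (· ≠ x) τ) (C.filterMap (dropVar x)) ↔ clauseSat τ C := by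
  simp only [clauseSat, List.mem_filterMap, dropVar]
  constructor
  · rintro ⟨ℓ', ⟨ℓ, hℓC, hℓ⟩, hsat⟩
    split_ifs at hℓ with hℓx
    cases hℓ
    exact ⟨ℓ, hℓC, hsat⟩
  · rintro ⟨⟨y, b⟩, hℓC, hsat⟩
    -- the only literals on `x` that `τ` can satisfy are `¬x`, which `C` lacks
    have hy : y ≠ x := by
      rintro rfl
      cases b
      · exact hC hℓC
      · simp [litSat, hx] at hsat
    exact ⟨(⟨y, hy⟩, b), ⟨(y, b), hℓC, dif_neg hy⟩, hsat⟩

lemma sat_condNeg_iff {F : CNF V} {τ : V → Bool} (hx : τ x = false) :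
    sat (Subtype.restrict (· ≠ x) τ) (condNeg F x) ↔ sat τ F := by
  constructor
  · intro hs C hCF
    by_cases hC : (x, false) ∈ C
    · exact ⟨(x, false), hC, hx⟩
    · exact (clauseSat_filterMap_dropVar_iff hx hC).1 (hs _ (mem_condNeg.2 ⟨C, hCF, hC, rfl⟩))
  · intro hs C' hC'
    obtain ⟨C, hCF, hC, rfl⟩ := mem_condNeg.1 hC'
    exact (clauseSat_filterMap_dropVar_iff hx hC).2 (hs C hCF)

theorem minModel_condNeg_iff {F : CNF V} {τ : V → Bool} (hx : τ x = false) :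
    MinModel (condNeg F x) (Subtype.restrict (· ≠ x) τ) ↔ MinModel F τ := by
  rw [MinModel, MinModel, sat_condNeg_iff hx]
  refine and_congr_right fun _ => ⟨fun hmin τ₂ hτ₂ hlt => ?_, fun hmin σ₂ hσ₂ hlt => ?_⟩
  · have hx₂ : τ₂ x = false := eq_false_of_leA hlt.1 hx
    exact hmin _ ((sat_condNeg_iff hx₂).2 hτ₂)
      ((ltA_iff_ltA_restrict (hx₂.trans hx.symm)).1 hlt)
  · rw [← restrict_extendFalse σ₂] at hσ₂ hlt
    exact hmin _ ((sat_condNeg_iff (extendFalse_self σ₂)).1 hσ₂)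
      ((ltA_iff_ltA_restrict ((extendFalse_self σ₂).trans hx.symm)).2 hlt)

end

/-- if `τ` is a minimal model of `F` with `τ x = false` then its
restriction is a minimal model of `F|_{¬x}`; conversely, extending a minimal model
of `F|_{¬x}` by `x = false` yields a minimal model of `F`. -/
theorem stmt11 {V : Type*} [DecidableEq V] (F : CNF V) (x : V) :
    (∀ τ : V → Bool, MinModel F τ → τ x = false →
      MinModel (condNeg F x) (fun y => τ y.1)) ∧
    (∀ σ : {y : V // y ≠ x} → Bool, MinModel (condNeg F x) σ →
      MinModel F (fun y => if h : y = x then false else σ ⟨y, h⟩)) := by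
  refine ⟨fun τ hτ hx => (minModel_condNeg_iff hx).2 hτ, fun σ hσ => ?_⟩
  rw [← restrict_extendFalse σ] at hσ
  exact (minModel_condNeg_iff (extendFalse_self σ)).1 hσ
end

section
/- Let F be a CNF formula, τ a model of F, and Copy(F)|_τ the copy formula conditioned on τ (with copy variable cₓ set to false whenever τ(x) = false via the implications cₓ → x). If the formula Copy(F)|_τ ∧ ⋁_{cₓ remaining} ¬cₓ is satisfiable by some assignment σ to the copy variables, then the assignment τ' defined by τ'(x) = σ(cₓ) for remaining copy variables and τ'(x) = τ(x) otherwise is a model of F strictly smaller than τ; hence τ is not a minimal model of F. -/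
/-- `x` occurs as a positive literal in some clause of `F`. -/
def hasPos {V : Type*} (F : CNF V) (x : V) : Prop := ∃ C ∈ F, (x, true) ∈ C

/-- Satisfaction of the copy formula `Copy(F)` conditioned on the assignment `τ`
to the original variables, where `σ x` is the value of the copy variable `c_x`:
(1) `c_x → x`; (2) for each clause with at least one positive literal,
`c_{b₁} ∧ … ∧ c_{b_ℓ} → c_{a₁} ∨ … ∨ c_{a_k}`; (3) `x → false` for every `x`
with no positive occurrence. -/
def CopySat {V : Type*} (F : CNF V) (τ σ : V → Bool) : Prop :=
  (∀ x, σ x = true → τ x = true) ∧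
  (∀ C ∈ F, (∃ ℓ ∈ C, ℓ.2 = true) →
      (∀ b, (b, false) ∈ C → σ b = true) → ∃ a, (a, true) ∈ C ∧ σ a = true) ∧
  (∀ x, ¬ hasPos F x → τ x = false)


/-! Clause (1) of the copy formula, `c_x → x`, makes the assignment `τ'` of the theorem
coincide with `σ` itself. Clause (2) then makes `σ` satisfy every clause with a positive
literal, and a purely negative clause is satisfied by `τ` through some `¬b` with `τ b`
false, hence `σ b` false as well. Finally `σ ≤ τ` by (1), strictly at the witness `x`. -/

section CopyFormula

variable {V : Type*}

theorem ite_eq_of_imp {τ σ : V → Bool} (hστ : ∀ x, σ x = true → τ x = true) :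
    (fun x => if τ x = true then σ x else τ x) = σ := by
  funext x
  by_cases hx : τ x = true
  · simp [hx]
  · have hσx : σ x = false := by simpa using mt (hστ x) hx
    simp [hx, hσx]

theorem ltA_of_imp {τ σ : V → Bool} (hστ : ∀ x, σ x = true → τ x = true)
    (hx : ∃ x, τ x = true ∧ σ x = false) : ltA σ τ := by
  obtain ⟨x, hτx, hσx⟩ := hx
  refine ⟨fun y => Bool.le_iff_imp.mpr (hστ y), fun h => ?_⟩
  simp [h, hτx] at hσx

theorem clauseSat_of_copySat_of_pos {F : CNF V} {τ σ : V → Bool} (hσ : CopySat F τ σ)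
    {C : Clause V} (hC : C ∈ F) (hpos : ∃ ℓ ∈ C, ℓ.2 = true) : clauseSat σ C := by
  by_cases hneg : ∀ b, (b, false) ∈ C → σ b = true
  · obtain ⟨a, haC, hσa⟩ := hσ.2.1 C hC hpos hneg
    exact ⟨(a, true), haC, hσa⟩
  · push Not at hneg
    obtain ⟨b, hbC, hσb⟩ := hneg
    exact ⟨(b, false), hbC, by simpa [litSat] using hσb⟩

theorem clauseSat_of_imp_of_not_pos {τ σ : V → Bool} (hστ : ∀ x, σ x = true → τ x = true)
    {C : Clause V} (hτC : clauseSat τ C) (hpos : ¬ ∃ ℓ ∈ C, ℓ.2 = true) : clauseSat σ C := by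
  obtain ⟨⟨b, v⟩, hbC, hτb⟩ := hτC
  have hv : v = false := by simpa using fun hv => hpos ⟨(b, v), hbC, hv⟩
  subst hv
  exact ⟨(b, false), hbC, by simpa [litSat] using mt (hστ b) (by simpa [litSat] using hτb)⟩

theorem sat_of_copySat {F : CNF V} {τ σ : V → Bool} (hτ : sat τ F) (hσ : CopySat F τ σ) :
    sat σ F := by
  intro C hC
  by_cases hpos : ∃ ℓ ∈ C, ℓ.2 = true
  · exact clauseSat_of_copySat_of_pos hσ hC hpos
  · exact clauseSat_of_imp_of_not_pos hσ.1 (hτ C hC) hpos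

theorem not_minModel_of_ltA {F : CNF V} {τ τ' : V → Bool} (hτ' : sat τ' F) (hlt : ltA τ' τ) :
    ¬ MinModel F τ :=
  fun hmin => hmin.2 τ' hτ' hlt

end CopyFormula

/-- if `Copy(F)|_τ ∧ ⋁ ¬c_x` (over the remaining copy variables) is
satisfied by `σ`, then the assignment `τ'` agreeing with `σ` on variables true in
`τ` and with `τ` elsewhere is a model of `F` strictly smaller than `τ`; hence `τ`
is not a minimal model. -/
theorem stmt14 {V : Type*} (F : CNF V) (τ : V → Bool) (hτ : sat τ F)
    (σ : V → Bool) (hσ : CopySat F τ σ) (hx : ∃ x, τ x = true ∧ σ x = false) :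
    (sat (fun x => if τ x = true then σ x else τ x) F ∧
      ltA (fun x => if τ x = true then σ x else τ x) τ) ∧
    ¬ MinModel F τ := by
  rw [ite_eq_of_imp hσ.1]
  have hsat : sat σ F := sat_of_copySat hτ hσ
  have hlt : ltA σ τ := ltA_of_imp hσ.1 hx
  exact ⟨⟨hsat, hlt⟩, not_minModel_of_ltA hsat hlt⟩
end
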